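/- arXiv:1806.09238 — 2 statements merged into one kernel-verified Lean document; each statement's English description precedes it below -/
import Mathlib

section
/- For Re(s) > 1/2 and x > 0, the Mellin transform identity ∫₀^∞ t^{s-1} (∑_{n≥1} μ(n) e^{-n²xt}) dt = Γ(s)/(x^s ζ(2s)) holds. -/
set_option maxHeartbeats 1000000

open ArithmeticFunction MeasureTheory
open scoped ArithmeticFunction.Moebius

theorem mellin_moebius_theta (s : ℂ) (hs : 1/2 < s.re) (x : ℝ) (hx : 0 < x) :
    ∫ t in Set.Ioi (0:ℝ), (t:ℂ)^(s-1) *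
        (∑' n : ℕ, (μ (n+1) : ℂ) * Complex.exp (-((n+1:ℝ))^2 * x * t))
      = Complex.Gamma s / ((x:ℂ)^s * riemannZeta (2*s)) := by
  have hs0 : 0 < s.re := by linarith
  have h1 : 1 < (2*s).re := by
    have : (2*s).re = 2 * s.re := by simp [Complex.mul_re]
    rw [this]; linarith
  set a : ℕ → ℂ := fun n ↦ (μ (n+1) : ℂ) with ha
  set p : ℕ → ℝ := fun n ↦ ((n+1:ℝ))^2 * x with hp
  have hppos : ∀ n, 0 < p n := fun n ↦ by positivity
  set F : ℝ → ℂ := fun t ↦ ∑' n : ℕ, (μ (n+1) : ℂ) * Complex.exp (-((n+1:ℝ))^2 * x * t)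
    with hF
  have hterm : ∀ (t : ℝ) (n : ℕ), (μ (n+1) : ℂ) * Complex.exp (-((n+1:ℝ))^2 * x * t)
      = a n * (Real.exp (-(p n) * t) : ℝ) := by
    intro t n
    rw [Complex.ofReal_exp, ha, hp]
    congr 2
    push_cast
    ring
  have habs : ∀ n : ℕ, ‖a n‖ ≤ 1 := by
    intro n
    have := abs_moebius_le_one (n := n+1)
    rw [ha]
    simp only [Complex.norm_intCast]
    exact_mod_cast this
  have hFsum : ∀ t ∈ Set.Ioi (0:ℝ), HasSum (fun n ↦ a n * (Real.exp (-(p n) * t) : ℝ)) (F t) := by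
    intro t ht
    simp only [Set.mem_Ioi] at ht
    have hsummable : Summable fun n : ℕ ↦ a n * (Real.exp (-(p n) * t) : ℝ) := by
      apply Summable.of_norm
      refine Summable.of_nonneg_of_le (fun n ↦ norm_nonneg _) (fun n ↦ ?_)
        ((summable_nat_add_iff 1).mpr (summable_geometric_of_lt_one (Real.exp_pos (-(x*t))).le
          (Real.exp_lt_one_iff.mpr (by linarith [mul_pos hx ht]))))
      · rw [norm_mul, Complex.norm_real, Real.norm_eq_abs, Real.abs_exp, ← Real.exp_nat_mul]
        calc ‖a n‖ * Real.exp (-(p n) * t)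
            ≤ 1 * Real.exp (-(p n) * t) :=
              mul_le_mul_of_nonneg_right (habs n) (Real.exp_pos _).le
          _ = Real.exp (-(p n) * t) := one_mul _
          _ ≤ Real.exp ((n+1 : ℕ) * -(x*t)) := by
              apply Real.exp_le_exp.mpr
              rw [hp]
              push_cast
              nlinarith [mul_pos hx ht,
                mul_nonneg (mul_nonneg (by positivity : (0:ℝ) ≤ (n:ℝ)+1)
                  (Nat.cast_nonneg n : (0:ℝ) ≤ (n:ℝ))) (mul_pos hx ht).le]
    have h2 : F t = ∑' n : ℕ, a n * (Real.exp (-(p n) * t) : ℝ) :=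
      tsum_congr (fun n ↦ hterm t n)
    rw [h2]
    exact hsummable.hasSum
  have hnorm : Summable fun n ↦ ‖a n‖ / (p n) ^ s.re := by
    have h2 : LSeriesSummable (fun k ↦ (μ k : ℂ)) (2*s) :=
      ArithmeticFunction.LSeriesSummable_moebius_iff.mpr h1
    have hzsum : Summable fun n : ℕ ↦ ‖LSeries.term (fun k ↦ (μ k : ℂ)) (2*s) (n+1)‖ :=
      (summable_norm_iff.mpr h2).comp_injective (add_left_injective 1)
    refine Summable.of_nonneg_of_le (fun n ↦ by positivity) (fun n ↦ ?_) (hzsum.mul_left (x ^ (-s.re)))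
    · rw [LSeries.term_of_ne_zero (Nat.succ_ne_zero n), norm_div]
      have hn1 : (0:ℝ) < ((n+1:ℕ):ℝ) := by positivity
      have hnc : ‖((n+1:ℕ) : ℂ) ^ (2*s)‖ = ((n+1:ℕ):ℝ) ^ ((2*s).re) := by
        rw [← Complex.ofReal_natCast,
          Complex.norm_cpow_eq_rpow_re_of_pos hn1]
      rw [hnc]
      have hpre : (p n) ^ s.re = ((n+1:ℕ):ℝ) ^ ((2*s).re) * x ^ s.re := by
        show (((n:ℝ)+1)^2 * x) ^ s.re = ((n+1:ℕ):ℝ) ^ ((2*s).re) * x ^ s.re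
        have h' : ((n:ℝ)+1)^2 * x = ((n+1:ℕ):ℝ)^2 * x := by push_cast; ring
        rw [h', Real.mul_rpow (by positivity) hx.le, ← Real.rpow_natCast ((n+1:ℕ):ℝ) 2,
          ← Real.rpow_mul hn1.le]
        congr 2
        · simp [Complex.mul_re]
      rw [hpre, Real.rpow_neg hx.le]
      rw [div_eq_mul_inv, mul_inv, div_eq_mul_inv]
      ring_nf
      rw [mul_assoc]
      exact le_of_eq (mul_comm _ _)
  have key := hasSum_mellin (F := F) (fun n ↦ Or.inr (hppos n)) hs0 hFsum hnorm
  have hmellin : mellin F s = ∫ t in Set.Ioi (0:ℝ), (t:ℂ)^(s-1) * F t := by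
    simp [mellin, smul_eq_mul]
  rw [hF] at hmellin
  rw [← hmellin, ← key.tsum_eq]
  -- compute the tsum
  have hz : riemannZeta (2*s) ≠ 0 := riemannZeta_ne_zero_of_one_lt_re h1
  have hmul : riemannZeta (2*s) * LSeries (fun k ↦ (μ k : ℂ)) (2*s) = 1 := by
    have h := LSeries_zeta_mul_Lseries_moebius (s := 2*s) h1
    rwa [LSeries_zeta_eq_riemannZeta h1] at h
  have hmu : LSeries (fun k ↦ (μ k : ℂ)) (2*s) = (riemannZeta (2*s))⁻¹ := by
    have hmul' : LSeries (fun k ↦ (μ k : ℂ)) (2*s) * riemannZeta (2*s) = 1 := by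
      rw [mul_comm] at hmul; exact hmul
    exact eq_inv_of_mul_eq_one_left hmul'
  have hsummable2 : Summable (LSeries.term (fun k ↦ (μ k : ℂ)) (2*s)) :=
    ArithmeticFunction.LSeriesSummable_moebius_iff.mpr h1
  have hshift : ∑' n : ℕ, LSeries.term (fun k ↦ (μ k : ℂ)) (2*s) (n+1)
      = LSeries (fun k ↦ (μ k : ℂ)) (2*s) := by
    rw [LSeries, Summable.tsum_eq_zero_add hsummable2, LSeries.term_zero, zero_add]
  have htermeq : ∀ n : ℕ, Complex.Gamma s * a n / ((p n : ℝ) : ℂ) ^ s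
      = (Complex.Gamma s / (x:ℂ)^s) * LSeries.term (fun k ↦ (μ k : ℂ)) (2*s) (n+1) := by
    intro n
    rw [LSeries.term_of_ne_zero (Nat.succ_ne_zero n)]
    have hn0 : (0:ℝ) ≤ ((n+1:ℕ):ℝ) := by positivity
    have hpc : ((p n : ℝ) : ℂ) ^ s = ((n+1:ℕ):ℂ) ^ (2*s) * (x:ℂ)^s := by
      show (((((n:ℝ)+1)^2 * x : ℝ)):ℂ)^s = ((n+1:ℕ):ℂ) ^ (2*s) * (x:ℂ)^s
      have h' : (((n:ℝ)+1)^2 * x : ℝ) = (((n+1:ℕ):ℝ) ^ (2:ℝ)) * x := by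
        rw [Real.rpow_two]; push_cast; ring
      rw [h', Complex.ofReal_mul, Complex.mul_cpow_ofReal_nonneg (by positivity) hx.le,
        ← Complex.cpow_mul_ofReal_nonneg hn0 2 s]
      norm_num
    rw [hpc, div_mul_div_comm]
    rw [mul_comm (((n+1:ℕ):ℂ) ^ (2*s)) ((x:ℂ)^s)]
  calc ∑' n, Complex.Gamma s * a n / ((p n : ℝ) : ℂ) ^ s
      = ∑' n, (Complex.Gamma s / (x:ℂ)^s) * LSeries.term (fun k ↦ (μ k : ℂ)) (2*s) (n+1) :=
        tsum_congr htermeq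
    _ = (Complex.Gamma s / (x:ℂ)^s) * ∑' n, LSeries.term (fun k ↦ (μ k : ℂ)) (2*s) (n+1) :=
        tsum_mul_left
    _ = (Complex.Gamma s / (x:ℂ)^s) * (riemannZeta (2*s))⁻¹ := by rw [hshift, hmu]
    _ = Complex.Gamma s / ((x:ℂ)^s * riemannZeta (2*s)) := by
        rw [← div_div, div_eq_mul_inv (Complex.Gamma s / (x:ℂ)^s)]
end

section
/- For y > 0, α real, and β > 0, ∫₀^∞ cos(yt) e^{-t²/(4β)} cosh(αt) dt = √(πβ) · e^{α²β − βy²} · cos(2αβy). -/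
open MeasureTheory Real

theorem gaussian_cos_cosh_integral (y α β : ℝ) (hy : 0 < y) (hβ : 0 < β) :
    ∫ t in Set.Ioi (0:ℝ), Real.cos (y*t) * Real.exp (-t^2/(4*β)) * Real.cosh (α*t)
      = Real.sqrt (π*β) * Real.exp (α^2*β - β*y^2) * Real.cos (2*α*β*y) := by
  have hβ' : (β:ℝ) ≠ 0 := ne_of_gt hβ
  set b : ℂ := ((-(1/(4*β)) : ℝ) : ℂ) with hbdef
  have hbre : b.re < 0 := by
    simp only [hbdef, Complex.ofReal_re]
    have : 0 < 1/(4*β) := by positivity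
    linarith
  set c : ℂ := (α : ℂ) + (y : ℂ) * Complex.I with hcdef
  set g : ℝ → ℂ := fun t => Complex.exp (b*t^2 + c*t + 0) with hgdef
  have hint : Integrable g := integrable_cexp_quadratic' hbre c 0
  have hint' : Integrable (fun t : ℝ => g (-t)) := by
    have := hint.comp_neg
    simpa using this
  have hgneg : ∀ t : ℝ, g (-t) = Complex.exp (b*t^2 + (-c)*t + 0) := by
    intro t
    simp only [hgdef]
    congr 1
    push_cast
    ring
  -- pointwise identity
  have hpt : ∀ t : ℝ, Real.cos (y*t) * Real.exp (-t^2/(4*β)) * Real.cosh (α*t)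
      = ((1/2 : ℂ) * (g t + g (-t))).re := by
    intro t
    rw [hgneg t]
    have h1 : (b*t^2 + c*t + 0).re = -t^2/(4*β) + α*t := by
      simp [hbdef, hcdef, Complex.add_re, Complex.mul_re, ← Complex.ofReal_pow]
      ring
    have h1' : (b*t^2 + c*t + 0).im = y*t := by
      simp [hbdef, hcdef, Complex.add_im, Complex.mul_im, ← Complex.ofReal_pow]
    have h2 : (b*t^2 + (-c)*t + 0).re = -t^2/(4*β) + (-α)*t := by
      simp [hbdef, hcdef, Complex.add_re, Complex.mul_re, ← Complex.ofReal_pow]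
      ring
    have h2' : (b*t^2 + (-c)*t + 0).im = -(y*t) := by
      simp [hbdef, hcdef, Complex.add_im, Complex.mul_im, ← Complex.ofReal_pow]
    have : ((1/2 : ℂ) * (Complex.exp (b*t^2 + c*t + 0) + Complex.exp (b*t^2 + (-c)*t + 0))).re
        = (1/2) * ((Complex.exp (b*t^2 + c*t + 0)).re + (Complex.exp (b*t^2 + (-c)*t + 0)).re) := by
      simp [Complex.mul_re, Complex.add_re]
    rw [this, Complex.exp_re, Complex.exp_re, h1, h1', h2, h2', Real.cos_neg,
      Real.cosh_eq, Real.exp_add, Real.exp_add]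
    ring
  rw [MeasureTheory.setIntegral_congr_fun measurableSet_Ioi
    (fun t _ => hpt t)]
  -- pull out the real part
  have hint2 : IntegrableOn (fun t : ℝ => (1/2 : ℂ) * (g t + g (-t))) (Set.Ioi 0) :=
    (((hint.add hint').const_mul _).restrict)
  have key : (∫ t in Set.Ioi (0:ℝ), (1/2 : ℂ) * (g t + g (-t)))
      = (1/2 : ℂ) * ∫ t : ℝ, g t := by
    rw [MeasureTheory.integral_const_mul]
    congr 1
    rw [MeasureTheory.integral_add (hint.restrict) (hint'.restrict)]
    have h3 : (∫ t in Set.Ioi (0:ℝ), g (-t)) = ∫ t in Set.Iic (0:ℝ), g t := by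
      simpa using integral_comp_neg_Ioi (0:ℝ) g
    rw [h3, add_comm]
    exact intervalIntegral.integral_Iic_add_Ioi hint.integrableOn hint.integrableOn
  have hre : (∫ t in Set.Ioi (0:ℝ), ((1/2 : ℂ) * (g t + g (-t))).re)
      = ((∫ t in Set.Ioi (0:ℝ), (1/2 : ℂ) * (g t + g (-t)))).re := by
    exact integral_re hint2
  rw [hre, key]
  -- evaluate the Gaussian integral
  have hgauss : (∫ t : ℝ, g t) = (↑(Real.sqrt (4*π*β)) : ℂ) * Complex.exp ((β:ℂ) * c^2) := by
    rw [hgdef]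
    rw [integral_cexp_quadratic hbre c 0]
    congr 1
    · have hnb : -b = ((1/(4*β) : ℝ) : ℂ) := by simp [hbdef]
      rw [hnb]
      have : (↑π : ℂ) / ((1/(4*β) : ℝ) : ℂ) = ((4*π*β : ℝ) : ℂ) := by
        push_cast
        field_simp
      rw [this]
      rw [show ((1/2 : ℂ)) = ((1/2:ℝ):ℂ) by norm_num,
        ← Complex.ofReal_cpow (by positivity), Real.sqrt_eq_rpow]
    · congr 1
      have hβc : (β:ℂ) ≠ 0 := by exact_mod_cast hβ'
      rw [hbdef]
      push_cast
      field_simp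
      try ring
  rw [hgauss]
  -- compute the real part
  have hz : ((β:ℂ) * c^2).re = α^2*β - β*y^2 := by
    simp [hcdef, Complex.mul_re, Complex.add_re, Complex.add_im, sq]
    try ring
  have hz' : ((β:ℂ) * c^2).im = 2*α*β*y := by
    simp [hcdef, Complex.mul_im, Complex.add_re, Complex.add_im, sq]
    try ring
  have : ((1/2 : ℂ) * ((↑(Real.sqrt (4*π*β)) : ℂ) * Complex.exp ((β:ℂ) * c^2))).re
      = (1/2) * (Real.sqrt (4*π*β) * (Complex.exp ((β:ℂ) * c^2)).re) := by
    simp [Complex.mul_re]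
    try ring
  rw [this, Complex.exp_re, hz, hz']
  have hs : Real.sqrt (4*π*β) = 2 * Real.sqrt (π*β) := by
    rw [show (4*π*β : ℝ) = 2^2 * (π*β) by ring, Real.sqrt_mul (by positivity),
      Real.sqrt_sq (by norm_num)]
  rw [hs]
  ring
end
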